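/- arXiv:math/0410079 — 3 statements merged into one kernel-verified Lean document; each statement's English description precedes it below -/
import Mathlib

section
/- Suppose ρ : ℝ → [0,1] is even, continuous, nondecreasing on [0,∞) with ρ(0) = 0 and sup ρ = 1, and F is a distribution on ℝ with continuous distribution function. Fix b ∈ (0,1) and t ∈ ℝ. If P_F(X = t) < 1 − b, then the map s ↦ E_F[ρ((X − t)/s)] on (0,∞) is continuous, nonincreasing in s, tends to 0 as s → ∞, and tends to P_F(X ≠ t) as s → 0⁺; consequently there exists s > 0 with E_F[ρ((X − t)/s)] = b. -/
/-!
For `0 < s ≤ s'` evenness and monotonicity of `ρ` on `[0, ∞)` give `ρ((x - t)/s') ≤ ρ((x - t)/s)`.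
Everything else is dominated convergence with the constant bound `1`: pointwise,
`ρ((x - t)/s) → ρ 0 = 0` as `s → ∞`, and `→ 1_{x ≠ t}` as `s → 0⁺` because `ρ → sup ρ = 1` at
infinity. Since `b < 1 - P(X = t) = P(X ≠ t)`, the intermediate value theorem on `(0, ∞)` yields a
scale with value `b`.
-/

open MeasureTheory Filter Set Topology

theorem Function.Even.apply_abs {α β : Type*} [AddGroup α] [LinearOrder α] {f : α → β}
    (hf : Function.Even f) (x : α) : f |x| = f x := by
  rcases abs_choice x with h | h
  · rw [h]
  · rw [h]; exact hf x

theorem Function.Even.tendsto_atTop_ciSup {f : ℝ → ℝ} (hf : Function.Even f)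
    (hmono : MonotoneOn f (Ici 0)) (hbdd : BddAbove (range f)) :
    Tendsto f atTop (𝓝 (⨆ u, f u)) := by
  -- `u ↦ f (max u 0)` is monotone on `ℝ`, has the same range as `f`, and equals `f` near `∞`.
  set g : ℝ → ℝ := fun u => f (max u 0)
  have hg_mono : Monotone g := fun u v huv =>
    hmono (le_max_right u 0) (le_max_right v 0) (max_le_max_right 0 huv)
  have hg_range : range g = range f := by
    refine (range_subset_iff.2 fun u => mem_range_self _).antisymm (range_subset_iff.2 fun u => ?_)
    exact ⟨|u|, by simp only [max_eq_left (abs_nonneg u), hf.apply_abs]⟩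
  have hg_sup : (⨆ u, g u) = ⨆ u, f u := by simp only [iSup, hg_range]
  refine hg_sup ▸ (_root_.tendsto_atTop_ciSup hg_mono (hg_range ▸ hbdd)).congr' ?_
  filter_upwards [eventually_ge_atTop 0] with u hu
  simp only [g, max_eq_left hu]

theorem Function.Even.antitoneOn_apply_div {f : ℝ → ℝ} (hf : Function.Even f)
    (hmono : MonotoneOn f (Ici 0)) (y : ℝ) : AntitoneOn (fun s => f (y / s)) (Ioi 0) := by
  intro s (hs : 0 < s) s' (hs' : 0 < s') hss'
  simp only [← hf.apply_abs (y / _), abs_div, abs_of_pos hs, abs_of_pos hs']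
  exact hmono (div_nonneg (abs_nonneg y) hs'.le) (div_nonneg (abs_nonneg y) hs.le)
    (div_le_div_of_nonneg_left (abs_nonneg y) hs hss')

theorem Function.Even.tendsto_apply_div_nhdsGT_zero {f : ℝ → ℝ} {L : ℝ} (hf : Function.Even f)
    (hlim : Tendsto f atTop (𝓝 L)) {y : ℝ} (hy : y ≠ 0) :
    Tendsto (fun s => f (y / s)) (𝓝[>] 0) (𝓝 L) := by
  have hdiv : Tendsto (fun s => |y| / s) (𝓝[>] 0) atTop := by
    simpa only [div_eq_mul_inv] using tendsto_inv_nhdsGT_zero.const_mul_atTop (abs_pos.2 hy)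
  refine (hlim.comp hdiv).congr' ?_
  filter_upwards [self_mem_nhdsWithin] with s (hs : 0 < s)
  rw [Function.comp_apply, ← hf.apply_abs (y / s), abs_div, abs_of_pos hs]

/-- `s ↦ E_μ[ρ((X - t)/s)]`, whose root in `s` at level `b` is the M-scale `σ(F, t)`. -/
noncomputable def mscaleObjective (ρ : ℝ → ℝ) (μ : Measure ℝ) (t s : ℝ) : ℝ :=
  ∫ x, ρ ((x - t) / s) ∂μ

section mscaleObjective

variable {ρ : ℝ → ℝ} {μ : Measure ℝ} [IsFiniteMeasure μ] {t C : ℝ}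

theorem integrable_comp_sub_div (hcont : Continuous ρ) (hbdd : ∀ u, ‖ρ u‖ ≤ C) (s : ℝ) :
    Integrable (fun x => ρ ((x - t) / s)) μ :=
  (integrable_const C).mono' (by fun_prop) (.of_forall fun _ => hbdd _)

theorem continuousOn_mscaleObjective (hcont : Continuous ρ) (hbdd : ∀ u, ‖ρ u‖ ≤ C) :
    ContinuousOn (mscaleObjective ρ μ t) (Ioi 0) := fun _ hs =>
  (continuousAt_of_dominated (bound := fun _ => C) (.of_forall fun _ => by fun_prop)
    (.of_forall fun _ => .of_forall fun _ => hbdd _) (integrable_const C)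
    (.of_forall fun _ => by fun_prop (disch := exact ne_of_gt hs))).continuousWithinAt

theorem antitoneOn_mscaleObjective (hcont : Continuous ρ) (hbdd : ∀ u, ‖ρ u‖ ≤ C)
    (heven : Function.Even ρ) (hmono : MonotoneOn ρ (Ici 0)) :
    AntitoneOn (mscaleObjective ρ μ t) (Ioi 0) := fun s hs s' hs' hss' =>
  integral_mono (integrable_comp_sub_div hcont hbdd s') (integrable_comp_sub_div hcont hbdd s)
    fun x => heven.antitoneOn_apply_div hmono (x - t) hs hs' hss'

theorem tendsto_mscaleObjective_atTop (hcont : Continuous ρ) (hbdd : ∀ u, ‖ρ u‖ ≤ C)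
    (hρ0 : ρ 0 = 0) : Tendsto (mscaleObjective ρ μ t) atTop (𝓝 0) := by
  have hlim : ∀ x, Tendsto (fun s => ρ ((x - t) / s)) atTop (𝓝 0) := fun x =>
    hρ0 ▸ (hcont.tendsto 0).comp (tendsto_const_nhds.div_atTop tendsto_id)
  have := tendsto_integral_filter_of_dominated_convergence (μ := μ) (fun _ => C)
    (.of_forall fun _ => by fun_prop) (.of_forall fun _ => .of_forall fun _ => hbdd _)
    (integrable_const C) (.of_forall hlim)
  rwa [integral_zero] at this

theorem tendsto_mscaleObjective_nhdsGT_zero {L : ℝ} (hcont : Continuous ρ)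
    (hbdd : ∀ u, ‖ρ u‖ ≤ C) (heven : Function.Even ρ) (hρ0 : ρ 0 = 0)
    (hlim : Tendsto ρ atTop (𝓝 L)) :
    Tendsto (mscaleObjective ρ μ t) (𝓝[>] 0) (𝓝 (μ.real {t}ᶜ * L)) := by
  have hpoint : ∀ x, Tendsto (fun s => ρ ((x - t) / s)) (𝓝[>] 0)
      (𝓝 (({t}ᶜ : Set ℝ).indicator (fun _ => L) x)) := by
    intro x
    by_cases hx : x = t
    · simp only [hx, sub_self, zero_div, hρ0, mem_compl_iff, mem_singleton_iff, not_true,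
        not_false_eq_true, indicator_of_notMem, tendsto_const_nhds_iff]
    · rw [indicator_of_mem (by exact hx)]
      exact heven.tendsto_apply_div_nhdsGT_zero hlim (sub_ne_zero.2 hx)
  have := tendsto_integral_filter_of_dominated_convergence (μ := μ) (fun _ => C)
    (.of_forall fun _ => by fun_prop) (.of_forall fun _ => .of_forall fun _ => hbdd _)
    (integrable_const C) (.of_forall hpoint)
  rwa [integral_indicator_const L (measurableSet_singleton t).compl, smul_eq_mul] at this

end mscaleObjective

theorem mscale_exists_general (ρ : ℝ → ℝ) (μ : Measure ℝ) [IsProbabilityMeasure μ] (b t : ℝ)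
    (hρ_range : ∀ u, ρ u ∈ Set.Icc (0 : ℝ) 1)
    (hρ_even : ∀ u, ρ (-u) = ρ u)
    (hρ_cont : Continuous ρ)
    (hρ_mono : MonotoneOn ρ (Set.Ici 0))
    (hρ0 : ρ 0 = 0)
    (hρ_sup : (⨆ u : ℝ, ρ u) = 1)
    (hb : b ∈ Set.Ioo (0 : ℝ) 1)
    (hatom : (μ {t}).toReal < 1 - b) :
    ContinuousOn (fun s : ℝ => ∫ x, ρ ((x - t) / s) ∂μ) (Set.Ioi 0) ∧
    AntitoneOn (fun s : ℝ => ∫ x, ρ ((x - t) / s) ∂μ) (Set.Ioi 0) ∧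
    Tendsto (fun s : ℝ => ∫ x, ρ ((x - t) / s) ∂μ) atTop (𝓝 0) ∧
    Tendsto (fun s : ℝ => ∫ x, ρ ((x - t) / s) ∂μ) (𝓝[>] 0) (𝓝 ((μ {t}ᶜ).toReal)) ∧
    ∃ s : ℝ, 0 < s ∧ ∫ x, ρ ((x - t) / s) ∂μ = b := by
  have hρ_bdd : ∀ u, ‖ρ u‖ ≤ 1 := fun u => by
    rw [Real.norm_of_nonneg (hρ_range u).1]; exact (hρ_range u).2
  have hρ_lim : Tendsto ρ atTop (𝓝 1) :=
    hρ_sup ▸ Function.Even.tendsto_atTop_ciSup hρ_even hρ_mono ⟨1, by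
      rintro _ ⟨u, rfl⟩; exact (hρ_range u).2⟩
  have hcont := continuousOn_mscaleObjective (μ := μ) (t := t) hρ_cont hρ_bdd
  have htop := tendsto_mscaleObjective_atTop (μ := μ) (t := t) hρ_cont hρ_bdd hρ0
  have hzero := tendsto_mscaleObjective_nhdsGT_zero (μ := μ) (t := t) hρ_cont hρ_bdd hρ_even hρ0
    hρ_lim
  rw [mul_one] at hzero
  have hb_lt : b < μ.real {t}ᶜ := by
    rw [probReal_compl_eq_one_sub (measurableSet_singleton t)]
    exact lt_tsub_comm.1 hatom
  obtain ⟨s, hs, hsb⟩ := isPreconnected_Ioi.intermediate_value_Ioo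
    (le_principal_iff.2 (Ioi_mem_atTop 0)) (le_principal_iff.2 self_mem_nhdsWithin)
    hcont htop hzero ⟨hb.1, hb_lt⟩
  exact ⟨hcont, antitoneOn_mscaleObjective hρ_cont hρ_bdd hρ_even hρ_mono, htop, hzero, s, hs, hsb⟩

/-- Existence of the M-scale `σ(F,t)`: for an even, continuous loss `ρ` with
values in `[0,1]`, nondecreasing on `[0,∞)`, `ρ(0)=0`, `sup ρ = 1`, a
distribution `F` (a probability measure `μ`) with continuous distribution
function, `b ∈ (0,1)` and `t` with `P_F(X = t) < 1 - b`, the map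
`s ↦ E_F[ρ((X - t)/s)]` is continuous and nonincreasing on `(0,∞)`, tends to
`0` as `s → ∞` and to `P_F(X ≠ t)` as `s → 0⁺`; hence it takes the value `b`. -/
theorem mscale_exists (ρ : ℝ → ℝ) (μ : Measure ℝ) [IsProbabilityMeasure μ] (b t : ℝ)
    (hρ_range : ∀ u, ρ u ∈ Set.Icc (0 : ℝ) 1)
    (hρ_even : ∀ u, ρ (-u) = ρ u)
    (hρ_cont : Continuous ρ)
    (hρ_mono : MonotoneOn ρ (Set.Ici 0))
    (hρ0 : ρ 0 = 0)
    (hρ_sup : (⨆ u : ℝ, ρ u) = 1)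
    (hb : b ∈ Set.Ioo (0 : ℝ) 1)
    (hcdf : Continuous fun x : ℝ => (μ (Set.Iic x)).toReal)
    (hatom : (μ {t}).toReal < 1 - b) :
    ContinuousOn (fun s : ℝ => ∫ x, ρ ((x - t) / s) ∂μ) (Set.Ioi 0) ∧
    AntitoneOn (fun s : ℝ => ∫ x, ρ ((x - t) / s) ∂μ) (Set.Ioi 0) ∧
    Tendsto (fun s : ℝ => ∫ x, ρ ((x - t) / s) ∂μ) atTop (𝓝 0) ∧
    Tendsto (fun s : ℝ => ∫ x, ρ ((x - t) / s) ∂μ) (𝓝[>] 0) (𝓝 ((μ {t}ᶜ).toReal)) ∧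
    ∃ s : ℝ, 0 < s ∧ ∫ x, ρ ((x - t) / s) ∂μ = b :=
  mscale_exists_general ρ μ b t hρ_range hρ_even hρ_cont hρ_mono hρ0 hρ_sup hb hatom
end

section
/- Let ρ : ℝ → [0,1] be even, strictly increasing on [0,c] for some c > 0 with ρ(u) = 1 for |u| ≥ c and ρ(0) = 0, continuous, and let F be a distribution with P_F(X = t) = 0 for all t. Then for each t the solution s = σ(F,t) of E_F[ρ((X − t)/s)] = b, if it exists, is unique. -/
open MeasureTheory

private lemma mscale_key (ρ : ℝ → ℝ) (c : ℝ) (hc : 0 < c)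
    (μ : Measure ℝ) [IsProbabilityMeasure μ] (b t : ℝ)
    (hρ_range : ∀ u, ρ u ∈ Set.Icc (0 : ℝ) 1)
    (hρ_even : ∀ u, ρ (-u) = ρ u)
    (hρ_cont : Continuous ρ)
    (hρ_strict : StrictMonoOn ρ (Set.Icc 0 c))
    (hρ_one : ∀ u : ℝ, c ≤ |u| → ρ u = 1)
    (hb : b ∈ Set.Ioo (0 : ℝ) 1)
    (hatoms : ∀ x : ℝ, μ {x} = 0)
    (s₁ s₂ : ℝ) (hs₁ : 0 < s₁) (hs₂ : 0 < s₂) (hlt : s₁ < s₂)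
    (h₁ : (∫ x, ρ ((x - t) / s₁) ∂μ) = b)
    (h₂ : (∫ x, ρ ((x - t) / s₂) ∂μ) = b) : False := by
  -- ρ u = ρ |u|
  have habs : ∀ u : ℝ, ρ u = ρ |u| := by
    intro u
    rcases abs_cases u with ⟨h, _⟩ | ⟨h, _⟩
    · rw [h]
    · rw [h, hρ_even]
  -- monotone on nonneg reals
  have hmono : ∀ a a' : ℝ, 0 ≤ a → a ≤ a' → ρ a ≤ ρ a' := by
    intro a a' ha haa
    by_cases h : a' ≤ c
    · exact hρ_strict.monotoneOn ⟨ha, le_trans haa h⟩ ⟨le_trans ha haa, h⟩ haa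
    · rw [hρ_one a' (by rw [abs_of_nonneg (le_trans ha haa)]; linarith)]
      exact (hρ_range a).2
  set f₁ : ℝ → ℝ := fun x => ρ ((x - t) / s₁) with hf₁
  set f₂ : ℝ → ℝ := fun x => ρ ((x - t) / s₂) with hf₂
  have hcont₁ : Continuous f₁ := hρ_cont.comp (by continuity)
  have hcont₂ : Continuous f₂ := hρ_cont.comp (by continuity)
  have hint : ∀ (f : ℝ → ℝ), Continuous f → (∀ x, f x ∈ Set.Icc (0:ℝ) 1) →
      Integrable f μ := by
    intro f hf hfr
    refine (integrable_const (1:ℝ)).mono' hf.aestronglyMeasurable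
      (Filter.Eventually.of_forall fun x => ?_)
    rw [Real.norm_eq_abs, abs_of_nonneg (hfr x).1]
    exact (hfr x).2
  have hint₁ : Integrable f₁ μ := hint f₁ hcont₁ fun x => hρ_range _
  have hint₂ : Integrable f₂ μ := hint f₂ hcont₂ fun x => hρ_range _
  -- pointwise f₂ ≤ f₁
  have hle : ∀ x, f₂ x ≤ f₁ x := by
    intro x
    rw [hf₁, hf₂]
    simp only
    rw [habs ((x - t)/s₁), habs ((x - t)/s₂)]
    simp only [abs_div, abs_of_pos hs₁, abs_of_pos hs₂]
    exact hmono _ _ (div_nonneg (abs_nonneg _) hs₂.le)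
      (div_le_div_of_nonneg_left (abs_nonneg _) hs₁ hlt.le)
  -- integral of f₁ - f₂ is zero, hence f₁ = f₂ a.e.
  have heq : f₁ =ᵐ[μ] f₂ := by
    have h0 : (∫ x, (f₁ x - f₂ x) ∂μ) = 0 := by
      rw [integral_sub hint₁ hint₂, h₁, h₂, sub_self]
    have := (integral_eq_zero_iff_of_nonneg_ae
      (Filter.Eventually.of_forall fun x => sub_nonneg.2 (hle x)) (hint₁.sub hint₂)).1 h0
    filter_upwards [this] with x hx
    have : f₁ x - f₂ x = 0 := hx
    linarith
  -- a.e. x ≠ t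
  have hne : ∀ᵐ x ∂μ, x ≠ t := by
    rw [ae_iff]
    convert hatoms t using 2
    ext x; simp
  -- a.e. f₁ x = 1
  have hone : ∀ᵐ x ∂μ, f₁ x = 1 := by
    filter_upwards [heq, hne] with x hx hxt
    by_cases hcx : c < |x - t| / s₁
    · apply hρ_one
      rw [abs_div, abs_of_pos hs₁]
      exact hcx.le
    · exfalso
      push_neg at hcx
      have hpos : 0 < |x - t| := abs_pos.2 (sub_ne_zero.2 hxt)
      have hstrict : ρ (|x - t| / s₂) < ρ (|x - t| / s₁) := by
        apply hρ_strict ⟨div_nonneg (abs_nonneg _) hs₂.le, le_trans (by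
          exact div_le_div_of_nonneg_left (abs_nonneg _) hs₁ hlt.le) hcx⟩
          ⟨div_nonneg (abs_nonneg _) hs₁.le, hcx⟩
        exact div_lt_div_of_pos_left hpos hs₁ hlt
      have e1 : f₁ x = ρ (|x - t| / s₁) := by
        rw [hf₁]; simp only
        rw [habs, abs_div, abs_of_pos hs₁]
      have e2 : f₂ x = ρ (|x - t| / s₂) := by
        rw [hf₂]; simp only
        rw [habs, abs_div, abs_of_pos hs₂]
      rw [e1, e2] at hx
      linarith
  have : (∫ x, f₁ x ∂μ) = 1 := by
    rw [integral_congr_ae (hone.mono fun x hx => hx)]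
    simp
  rw [h₁] at this
  exact absurd this (ne_of_lt hb.2)

/-- Uniqueness of the M-scale `σ(F,t)` for a Tukey-type loss `ρ` (even,
continuous, strictly increasing on `[0,c]`, equal to `1` for `|u| ≥ c`,
`ρ(0)=0`, values in `[0,1]`) when `F` has no atoms: any two positive
solutions `s` of `E_F[ρ((X - t)/s)] = b` coincide. -/
theorem mscale_unique (ρ : ℝ → ℝ) (c : ℝ) (hc : 0 < c)
    (μ : Measure ℝ) [IsProbabilityMeasure μ] (b t : ℝ)
    (hρ_range : ∀ u, ρ u ∈ Set.Icc (0 : ℝ) 1)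
    (hρ_even : ∀ u, ρ (-u) = ρ u)
    (hρ_cont : Continuous ρ)
    (hρ_strict : StrictMonoOn ρ (Set.Icc 0 c))
    (hρ_one : ∀ u : ℝ, c ≤ |u| → ρ u = 1)
    (hρ0 : ρ 0 = 0)
    (hb : b ∈ Set.Ioo (0 : ℝ) 1)
    (hatoms : ∀ x : ℝ, μ {x} = 0) :
    ∀ s₁ s₂ : ℝ, 0 < s₁ → 0 < s₂ →
      (∫ x, ρ ((x - t) / s₁) ∂μ) = b → (∫ x, ρ ((x - t) / s₂) ∂μ) = b → s₁ = s₂ := by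
  intro s₁ s₂ hs₁ hs₂ h₁ h₂
  rcases lt_trichotomy s₁ s₂ with h | h | h
  · exact absurd (mscale_key ρ c hc μ b t hρ_range hρ_even hρ_cont hρ_strict hρ_one hb
      hatoms s₁ s₂ hs₁ hs₂ h h₁ h₂) not_false
  · exact h
  · exact absurd (mscale_key ρ c hc μ b t hρ_range hρ_even hρ_cont hρ_strict hρ_one hb
      hatoms s₂ s₁ hs₂ hs₁ h h₂ h₁) not_false
end

section
/- Suppose ρ is even with sup ρ = 1, and F₀ satisfies for all |t| ≥ t*: inf_{s⁻ ≤ s ≤ s⁺} [E_{F₀}ρ((X−t)/s) − E_{F₀}ρ(X/s)] > ε/(1−ε). Then for every F = (1−ε)F₀ + εH and every s ∈ [s⁻, s⁺], E_F[ρ((X−t)/s)] > E_F[ρ(X/s)] for all |t| ≥ t*; in particular any minimizer of t ↦ E_F[ρ((X−t)/s)] lies in (−t*, t*). -/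
open MeasureTheory

/-- If for all `|t| ≥ t⋆` and `s ∈ [s⁻, s⁺]` one has
`E_{F₀}ρ((X-t)/s) - E_{F₀}ρ(X/s) > ε/(1-ε)`, then for every contaminated
distribution `F = (1-ε)F₀ + εH` and every `s ∈ [s⁻, s⁺]`,
`E_F[ρ((X-t)/s)] > E_F[ρ(X/s)]` for all `|t| ≥ t⋆`; in particular any
minimizer of `t ↦ E_F[ρ((X-t)/s)]` lies in `(-t⋆, t⋆)`. -/
theorem s_location_minimizer_localized
    (ρ : ℝ → ℝ) (ε tstar slo shi : ℝ)
    (μ₀ : Measure ℝ) [IsProbabilityMeasure μ₀]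
    (hε : 0 ≤ ε) (hε' : ε < 1 / 2)
    (htstar : 0 < tstar) (hslo : 0 < slo) (hs : slo ≤ shi)
    (hρ_even : ∀ u, ρ (-u) = ρ u)
    (hρ_range : ∀ u, ρ u ∈ Set.Icc (0 : ℝ) 1)
    (hρ_meas : Measurable ρ)
    (hsym : μ₀.map (fun x : ℝ => -x) = μ₀)
    (hkey : ∀ t : ℝ, tstar ≤ |t| → ∀ s ∈ Set.Icc slo shi,
      ε / (1 - ε) < (∫ x, ρ ((x - t) / s) ∂μ₀) - ∫ x, ρ (x / s) ∂μ₀) :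
    ∀ H : Measure ℝ, IsProbabilityMeasure H → ∀ s ∈ Set.Icc slo shi,
      (∀ t : ℝ, tstar ≤ |t| →
        (∫ x, ρ (x / s) ∂(ENNReal.ofReal (1 - ε) • μ₀ + ENNReal.ofReal ε • H)) <
          ∫ x, ρ ((x - t) / s) ∂(ENNReal.ofReal (1 - ε) • μ₀ + ENNReal.ofReal ε • H)) ∧
      (∀ m : ℝ,
        IsMinOn (fun t : ℝ => ∫ x, ρ ((x - t) / s)
          ∂(ENNReal.ofReal (1 - ε) • μ₀ + ENNReal.ofReal ε • H)) Set.univ m →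
        |m| < tstar) := by

  intro H hH s hsmem
  have hs1 : 0 < s := lt_of_lt_of_le hslo hsmem.1
  have h1ε : (0:ℝ) < 1 - ε := by linarith
  -- integrability of x ↦ ρ ((x - t)/s) under any probability measure
  have hmeas : ∀ t : ℝ, Measurable fun x : ℝ => ρ ((x - t) / s) := fun t =>
    hρ_meas.comp ((measurable_id.sub_const t).div_const s)
  have hint : ∀ (ν : Measure ℝ) [IsProbabilityMeasure ν] (t : ℝ),
      Integrable (fun x : ℝ => ρ ((x - t) / s)) ν := by
    intro ν _ t
    refine ⟨(hmeas t).aestronglyMeasurable, ?_⟩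
    apply MeasureTheory.HasFiniteIntegral.of_bounded (C := (1:ℝ))
    filter_upwards with x
    rw [Real.norm_eq_abs, abs_le]
    constructor
    · linarith [(hρ_range ((x - t)/s)).1]
    · exact (hρ_range ((x - t)/s)).2
  -- integral bounds under probability measures
  have hbd : ∀ (ν : Measure ℝ) [IsProbabilityMeasure ν] (t : ℝ),
      (0:ℝ) ≤ (∫ x, ρ ((x - t) / s) ∂ν) ∧ (∫ x, ρ ((x - t) / s) ∂ν) ≤ 1 := by
    intro ν _ t
    constructor
    · exact integral_nonneg fun x => (hρ_range _).1
    · calc (∫ x, ρ ((x - t) / s) ∂ν) ≤ ∫ _x, (1:ℝ) ∂ν :=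
            integral_mono (hint ν t) (integrable_const 1) fun x => (hρ_range _).2
        _ = 1 := by simp
  -- splitting the integral over the mixture
  have hsplit : ∀ t : ℝ,
      (∫ x, ρ ((x - t) / s) ∂(ENNReal.ofReal (1 - ε) • μ₀ + ENNReal.ofReal ε • H))
        = (1 - ε) * (∫ x, ρ ((x - t) / s) ∂μ₀) + ε * ∫ x, ρ ((x - t) / s) ∂H := by
    intro t
    have hi₀ : Integrable (fun x : ℝ => ρ ((x - t) / s)) (ENNReal.ofReal (1 - ε) • μ₀) :=
      (hint μ₀ t).smul_measure ENNReal.ofReal_ne_top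
    have hiH : Integrable (fun x : ℝ => ρ ((x - t) / s)) (ENNReal.ofReal ε • H) :=
      (hint H t).smul_measure ENNReal.ofReal_ne_top
    rw [integral_add_measure hi₀ hiH, integral_smul_measure, integral_smul_measure,
      ENNReal.toReal_ofReal (le_of_lt h1ε), ENNReal.toReal_ofReal hε]
    simp [smul_eq_mul]
  have hmain : ∀ t : ℝ, tstar ≤ |t| →
      (∫ x, ρ (x / s) ∂(ENNReal.ofReal (1 - ε) • μ₀ + ENNReal.ofReal ε • H)) <
        ∫ x, ρ ((x - t) / s) ∂(ENNReal.ofReal (1 - ε) • μ₀ + ENNReal.ofReal ε • H) := by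
    intro t ht
    have h0 : ∀ (ν : Measure ℝ), (∫ x, ρ ((x - (0:ℝ)) / s) ∂ν) = ∫ x, ρ (x / s) ∂ν := by
      intro ν; simp
    have e1 := hsplit t
    have e0 := hsplit 0
    simp only [sub_zero] at e0
    rw [e0, e1]
    have hk := hkey t ht s hsmem
    have hk' : ε < (1 - ε) * ((∫ x, ρ ((x - t) / s) ∂μ₀) - ∫ x, ρ (x / s) ∂μ₀) := by
      rw [div_lt_iff₀ h1ε] at hk; linarith [hk]
    have hb0 := hbd H 0
    have hbt := hbd H t
    rw [h0] at hb0
    nlinarith [hb0.1, hb0.2, hbt.1, hbt.2]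
  refine ⟨hmain, ?_⟩
  intro m hmin
  by_contra hcon
  push_neg at hcon
  have h1 := hmain m hcon
  have h2 := hmin (Set.mem_univ (0:ℝ))
  simp only [Set.mem_setOf_eq, sub_zero] at h2
  linarith
end
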